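/- arXiv:2206.09884 — 6 statements merged into one kernel-verified Lean document; each statement's English description precedes it below -/
import Mathlib

section
/- Let G be a finite simple graph, let 𝔛 be a set of descriptions for G, and let X₁, X₂ ⊆ V(G) be vertex sets disjoint from the set ⋃_{(r,𝒳)∈𝔛} ({r} ∪ ⋃_{X∈𝒳} X). Assume that for every (r,𝒳) ∈ 𝔛, each of the pairs (r, 𝒳 ∪ {X₁ ∪ X₂}), (r, 𝒳 ∪ {X₁}), and (r, 𝒳 ∪ {X₂}) is a description for G. Then 𝒯_G({(r, 𝒳 ∪ {X₁ ∪ X₂}) : (r,𝒳) ∈ 𝔛}) = 𝒯_G({(r, 𝒳 ∪ {X₁}) : (r,𝒳) ∈ 𝔛}) ∪ 𝒯_G({(r, 𝒳 ∪ {X₂}) : (r,𝒳) ∈ 𝔛}). -/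
/-!
Whether a tree `C` is described only depends on `N(C)` being a transversal. A set meeting
`X₁ ∪ X₂` in exactly one vertex meets exactly one of `X₁`, `X₂`, in that same vertex, and it
can be transversal for the parts with `X₁` (resp. `X₂`) instead. Conversely, a transversal for
`𝒳 ∪ {X₁}` lies in `⋃ 𝒳 ∪ X₁`, so when `X₂` misses `⋃ 𝒳` it meets `X₁ ∪ X₂` only in `X₁`.
-/

namespace Secluded

open SimpleGraph

variable {V : Type*}

/-- The open neighborhood of a vertex set `S`: vertices outside `S` with a neighbor in `S`. -/
def openNbhd (G : SimpleGraph V) (S : Set V) : Set V :=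
  {v | v ∉ S ∧ ∃ u ∈ S, G.Adj v u}

/-- The graph obtained from `G` by deleting the vertices in `D`
(kept on the same vertex type; deleted vertices become isolated). -/
def gdelete (G : SimpleGraph V) (D : Set V) : SimpleGraph V where
  Adj x y := G.Adj x y ∧ x ∉ D ∧ y ∉ D
  symm := ⟨fun _ _ h => ⟨h.1.symm, h.2.2, h.2.1⟩⟩
  loopless := ⟨fun x h => G.loopless.irrefl x h.1⟩

/-- `S` induces a tree (connected and acyclic induced subgraph) in `G`. -/
def IsInducedTree (G : SimpleGraph V) (S : Set V) : Prop :=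
  (G.induce S).IsTree

/-- `S` is a `k`-secluded tree in `G`. -/
def IsSecludedTree (G : SimpleGraph V) (k : ℕ) (S : Set V) : Prop :=
  IsInducedTree G S ∧ (openNbhd G S).ncard ≤ k

/-- The set of `k`-secluded supertrees of `F` in `G`. -/
def secl (G : SimpleGraph V) (k : ℕ) (F : Set V) : Set (Set V) :=
  {S | IsSecludedTree G k S ∧ F ⊆ S}

/-- Total weight of a vertex set. -/
noncomputable def weight (w : V → ℕ) (S : Set V) : ℕ := ∑ᶠ x ∈ S, w x

/-- The maximum-weight elements of a collection of vertex sets. -/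
def maxset (w : V → ℕ) (X : Set (Set V)) : Set (Set V) :=
  {S | S ∈ X ∧ ∀ S' ∈ X, weight w S' ≤ weight w S}

/-- `S` consists of exactly one vertex from each member of `𝒳`. -/
def IsTransversal (𝒳 : Set (Set V)) (S : Set V) : Prop :=
  S ⊆ ⋃₀ 𝒳 ∧ ∀ X ∈ 𝒳, (S ∩ X).ncard = 1

/-- The vertex set of the connected component of `G − S` containing `r`. -/
def component (G : SimpleGraph V) (S : Set V) (r : V) : Set V :=
  {x | (gdelete G S).Reachable r x}

/-- `(r, 𝒳)` is a description for `G`. -/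
def IsDescription (G : SimpleGraph V) (r : V) (𝒳 : Set (Set V)) : Prop :=
  (∀ X ∈ 𝒳, r ∉ X) ∧ 𝒳.Pairwise Disjoint ∧
    ∀ S : Set V, IsTransversal 𝒳 S →
      (G.induce (component G S r)).IsAcyclic ∧ openNbhd G (component G S r) = S

/-- The induced tree (given by its vertex set `C`) is described by the description `D`. -/
def Describes (G : SimpleGraph V) (D : V × Set (Set V)) (C : Set V) : Prop :=
  D.1 ∈ C ∧ IsTransversal D.2 (openNbhd G C)

/-- `𝒯_G(𝔛)`: the set of induced trees of `G` described by some member of `𝔛`. -/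
def treesOf (G : SimpleGraph V) (𝔛 : Set (V × Set (Set V))) : Set (Set V) :=
  {C | IsInducedTree G C ∧ ∃ D ∈ 𝔛, Describes G D C}

/-- No induced tree of `G` is described by two distinct members of `𝔛`. -/
def NonRedundant (G : SimpleGraph V) (𝔛 : Set (V × Set (Set V))) : Prop :=
  ∀ C : Set V, IsInducedTree G C → ∀ D₁ ∈ 𝔛, ∀ D₂ ∈ 𝔛,
    Describes G D₁ C → Describes G D₂ C → D₁ = D₂

/-- Degree of a vertex. -/
noncomputable def degOf (G : SimpleGraph V) (v : V) : ℕ := (G.neighborSet v).ncard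

variable {𝒳 : Set (Set V)} {X Y S : Set V}

lemma sUnion_union_singleton : ⋃₀ (𝒳 ∪ {X}) = ⋃₀ 𝒳 ∪ X := by
  rw [Set.union_singleton, Set.sUnion_insert, Set.union_comm]

lemma IsTransversal.union_singleton_of_inter_eq (hT : IsTransversal (𝒳 ∪ {X}) S)
    (hXY : S ∩ X = S ∩ Y) : IsTransversal (𝒳 ∪ {Y}) S := by
  obtain ⟨hsub, hcard⟩ := hT
  rw [sUnion_union_singleton] at hsub
  refine ⟨fun y hy => ?_, ?_⟩
  · rw [sUnion_union_singleton]
    rcases hsub hy with hy𝒳 | hyX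
    · exact Or.inl hy𝒳
    · exact Or.inr (hXY ▸ ⟨hy, hyX⟩ : y ∈ S ∩ Y).2
  · rintro Z (hZ | rfl)
    · exact hcard Z (Or.inl hZ)
    · rw [← hXY]
      exact hcard X (Or.inr rfl)

lemma IsTransversal.union_singleton_union (hT : IsTransversal (𝒳 ∪ {X}) S)
    (hY : Disjoint Y (⋃₀ 𝒳)) : IsTransversal (𝒳 ∪ {X ∪ Y}) S := by
  refine hT.union_singleton_of_inter_eq ?_
  refine (Set.inter_subset_inter_right S Set.subset_union_left).antisymm ?_
  rintro y ⟨hyS, hyX | hyY⟩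
  · exact ⟨hyS, hyX⟩
  · have hy := hT.1 hyS
    rw [sUnion_union_singleton] at hy
    exact ⟨hyS, hy.resolve_left (Set.disjoint_left.mp hY hyY)⟩

lemma IsTransversal.union_singleton_of_union (hT : IsTransversal (𝒳 ∪ {X ∪ Y}) S) :
    IsTransversal (𝒳 ∪ {X}) S ∨ IsTransversal (𝒳 ∪ {Y}) S := by
  obtain ⟨x, hx⟩ := Set.ncard_eq_one.mp (hT.2 (X ∪ Y) (Or.inr rfl))
  have hxS : x ∈ S ∩ (X ∪ Y) := hx ▸ Set.mem_singleton x
  have trace_eq {Z : Set V} (hZ : Z ⊆ X ∪ Y) (hxZ : x ∈ Z) : S ∩ (X ∪ Y) = S ∩ Z := by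
    refine (Set.inter_subset_inter_right S hZ).antisymm' ?_
    rw [hx, Set.singleton_subset_iff]
    exact ⟨hxS.1, hxZ⟩
  rcases hxS.2 with hxX | hxY
  · exact Or.inl (hT.union_singleton_of_inter_eq (trace_eq Set.subset_union_left hxX))
  · exact Or.inr (hT.union_singleton_of_inter_eq (trace_eq Set.subset_union_right hxY))

lemma mem_treesOf_extend (G : SimpleGraph V) (𝔛 : Set (V × Set (Set V))) (X : Set V)
    (C : Set V) :
    C ∈ treesOf G {E | ∃ D ∈ 𝔛, E = (D.1, D.2 ∪ {X})} ↔
      IsInducedTree G C ∧ ∃ D ∈ 𝔛, D.1 ∈ C ∧ IsTransversal (D.2 ∪ {X}) (openNbhd G C) := by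
  simp only [treesOf, Describes, Set.mem_ofPred_eq]
  constructor
  · rintro ⟨hC, _, ⟨D, hD, rfl⟩, hr, hT⟩
    exact ⟨hC, D, hD, hr, hT⟩
  · rintro ⟨hC, D, hD, hr, hT⟩
    exact ⟨hC, _, ⟨D, hD, rfl⟩, hr, hT⟩

theorem treesOf_union_part_general (G : SimpleGraph V)
    (𝔛 : Set (V × Set (Set V))) (X₁ X₂ : Set V)
    (hdisj₁ : ∀ D ∈ 𝔛, Disjoint X₁ ({D.1} ∪ ⋃₀ D.2))
    (hdisj₂ : ∀ D ∈ 𝔛, Disjoint X₂ ({D.1} ∪ ⋃₀ D.2)) :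
    treesOf G {E | ∃ D ∈ 𝔛, E = (D.1, D.2 ∪ {X₁ ∪ X₂})} =
      treesOf G {E | ∃ D ∈ 𝔛, E = (D.1, D.2 ∪ {X₁})} ∪
        treesOf G {E | ∃ D ∈ 𝔛, E = (D.1, D.2 ∪ {X₂})} := by
  ext C
  simp only [Set.mem_union, mem_treesOf_extend]
  constructor
  · rintro ⟨hC, D, hD, hr, hT⟩
    exact hT.union_singleton_of_union.imp (fun h => ⟨hC, D, hD, hr, h⟩)
      (fun h => ⟨hC, D, hD, hr, h⟩)
  · rintro (⟨hC, D, hD, hr, hT⟩ | ⟨hC, D, hD, hr, hT⟩)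
    · exact ⟨hC, D, hD, hr,
        hT.union_singleton_union ((hdisj₂ D hD).mono_right Set.subset_union_right)⟩
    · refine ⟨hC, D, hD, hr, Set.union_comm X₂ X₁ ▸ ?_⟩
      exact hT.union_singleton_union ((hdisj₁ D hD).mono_right Set.subset_union_right)

/-- Merging two extra parts `X₁`, `X₂` (disjoint from everything appearing in
the descriptions of `𝔛`): the trees described after adding the part `X₁ ∪ X₂` are exactly
those described after adding `X₁` together with those described after adding `X₂`. -/
theorem treesOf_union_part [Fintype V] (G : SimpleGraph V)
    (𝔛 : Set (V × Set (Set V))) (X₁ X₂ : Set V)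
    (hdesc : ∀ D ∈ 𝔛, IsDescription G D.1 D.2)
    (hdisj₁ : ∀ D ∈ 𝔛, Disjoint X₁ ({D.1} ∪ ⋃₀ D.2))
    (hdisj₂ : ∀ D ∈ 𝔛, Disjoint X₂ ({D.1} ∪ ⋃₀ D.2))
    (h12 : ∀ D ∈ 𝔛, IsDescription G D.1 (D.2 ∪ {X₁ ∪ X₂}))
    (h1 : ∀ D ∈ 𝔛, IsDescription G D.1 (D.2 ∪ {X₁}))
    (h2 : ∀ D ∈ 𝔛, IsDescription G D.1 (D.2 ∪ {X₂})) :
    treesOf G {E | ∃ D ∈ 𝔛, E = (D.1, D.2 ∪ {X₁ ∪ X₂})} =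
      treesOf G {E | ∃ D ∈ 𝔛, E = (D.1, D.2 ∪ {X₁})} ∪
        treesOf G {E | ∃ D ∈ 𝔛, E = (D.1, D.2 ∪ {X₂})} :=
  treesOf_union_part_general G 𝔛 X₁ X₂ hdisj₁ hdisj₂

end Secluded
end

section
/- Let G be a finite simple graph with a weight function w : V(G) → ℕ assigning a positive weight to every vertex, let k ≥ 0 be an integer, and let F ⊆ V(G) be a nonempty vertex set. Suppose G contains a degree-1 vertex v with F ≠ {v}, and let u be the unique neighbor of v. Define w' on V(G−v) by w'(u) = w(u) + w(v) and w'(x) = w(x) for x ≠ u, and define F' = (F \ {v}) ∪ {u} if v ∈ F and F' = F otherwise. If 𝔛 is a non-redundant set of descriptions for G − v such that 𝒯_{G−v}(𝔛) = maxset_{w'}(secl_{G−v}^{k}(F')), then 𝔛 is a non-redundant set of descriptions for G such that 𝒯_G(𝔛) = maxset_w(secl_G^{k}(F)). -/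
namespace SimpleGraph

variable {V : Type*} {H : SimpleGraph V} {s : Set V} {u v x y : V}

lemma Reachable.exists_adj_of_ne (h : H.Reachable x y) (hne : x ≠ y) : ∃ z, H.Adj z y :=
  let ⟨p⟩ := h
  ⟨_, p.adj_penultimate (Walk.not_nil_of_ne hne)⟩

lemma Connected.exists_adj_of_induce (h : (H.induce s).Connected) (hx : x ∈ s) (hy : y ∈ s)
    (hne : x ≠ y) : ∃ z ∈ s, H.Adj x z := by
  obtain ⟨z, hz⟩ := (h.preconnected ⟨y, hy⟩ ⟨x, hx⟩).exists_adj_of_ne (by simpa using hne.symm)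
  exact ⟨z, z.2, hz.symm⟩

namespace Walk

lemma IsTrail.notMem_of_mem_edges_of_neighborSet_subset (hv : H.neighborSet v ⊆ {u})
    {p : H.Walk x y} (hp : p.IsTrail) (hxy : x ≠ y → v ≠ x ∧ v ≠ y) :
    ∀ e ∈ p.edges, v ∉ e := by
  classical
  -- a trail has an even number of edges at `v` but, having distinct edges, at most one `s(v, u)`
  have heven := (hp.even_countP_edges_iff v).2 hxy
  have hle : p.edges.countP (v ∈ ·) ≤ 1 := by
    refine (List.countP_mono_left fun e he hve => ?_).trans
      (List.nodup_iff_count_le_one.1 hp.edges_nodup s(v, u))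
    induction e with | h a b => ?_
    have hab := p.adj_of_mem_edges he
    rcases Sym2.mem_iff.1 (of_decide_eq_true hve) with rfl | rfl
    · simp [show b = u from hv hab]
    · simp [show a = u from hv hab.symm, Sym2.eq_swap]
  have hzero : p.edges.countP (v ∈ ·) = 0 := by
    obtain ⟨k, hk⟩ := heven
    omega
  simpa using List.countP_eq_zero.1 hzero

lemma IsPath.notMem_support_of_neighborSet_subset (hv : H.neighborSet v ⊆ {u})
    {p : H.Walk x y} (hp : p.IsPath) (hx : x ≠ v) (hy : y ≠ v) : v ∉ p.support := by
  rw [mem_support_iff_exists_mem_edges]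
  rintro (rfl | ⟨e, he, hve⟩)
  · exact hy rfl
  · exact hp.isTrail.notMem_of_mem_edges_of_neighborSet_subset hv
      (fun _ => ⟨hx.symm, hy.symm⟩) e he hve

end Walk

lemma mem_of_mem_support_map_induce {a b : s} {p : (H.induce s).Walk a b}
    (hx : x ∈ (p.map (Embedding.induce s).toHom).support) : x ∈ s := by
  obtain ⟨z, -, rfl⟩ := List.mem_map.1 ((Walk.support_map _ _) ▸ hx)
  exact z.2

lemma isAcyclic_induce_insert_iff (hv : H.neighborSet v ⊆ {u}) :
    (H.induce (insert v s)).IsAcyclic ↔ (H.induce s).IsAcyclic := by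
  refine ⟨fun h => h.embedding (induceHomOfLE H (Set.subset_insert v s)), fun h x c hc => ?_⟩
  set c' := c.map (Embedding.induce (insert v s)).toHom
  have hc' : c'.IsCycle := hc.map Subtype.val_injective
  have hvc : v ∉ c'.support := by
    rw [Walk.mem_support_iff_exists_mem_edges_of_not_nil hc'.not_nil]
    rintro ⟨e, he, hve⟩
    exact hc'.isTrail.notMem_of_mem_edges_of_neighborSet_subset hv (absurd rfl) e he hve
  have hs : ∀ z ∈ c'.support, z ∈ s := fun z hz =>
    (mem_of_mem_support_map_induce hz).resolve_left (by rintro rfl; exact hvc hz)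
  have hcycle := (Walk.map_induce c' hs).symm ▸ hc'
  exact h (c'.induce s hs) ((Walk.isCycle_map_iff_of_injective Subtype.val_injective).1 hcycle)

lemma connected_induce_insert_iff (hv : H.neighborSet v = {u}) (hu : u ∈ s) (hvs : v ∉ s) :
    (H.induce (insert v s)).Connected ↔ (H.induce s).Connected := by
  have hvu : H.Adj v u := (hv ▸ rfl : u ∈ H.neighborSet v)
  refine ⟨fun h => (connected_iff _).2 ⟨fun x y => ?_, ⟨⟨u, hu⟩⟩⟩, fun h => ?_⟩
  · obtain ⟨p, hp⟩ := (h.preconnected ⟨x, Or.inr x.2⟩ ⟨y, Or.inr y.2⟩).exists_isPath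
    set p' := p.map (Embedding.induce (insert v s)).toHom
    have hvp : v ∉ p'.support :=
      (hp.map Subtype.val_injective).notMem_support_of_neighborSet_subset hv.le
        (fun h => hvs (h ▸ x.2)) (fun h => hvs (h ▸ y.2))
    have hs : ∀ z ∈ p'.support, z ∈ s := fun z hz =>
      (mem_of_mem_support_map_induce hz).resolve_left (by rintro rfl; exact hvp hz)
    exact ⟨p'.induce s hs⟩
  · rw [← Set.union_singleton]
    refine connected_induce_union h.preconnected ?_ hu rfl hvu.symm
    simp [induce_singleton_eq_top]

end SimpleGraph

namespace Secluded

open SimpleGraph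

variable {V : Type*}

section Deletion

variable {G : SimpleGraph V} {D D' S : Set V} {r u v x y : V}

@[simp] lemma gdelete_adj : (gdelete G D).Adj x y ↔ G.Adj x y ∧ x ∉ D ∧ y ∉ D := Iff.rfl

lemma gdelete_le : gdelete G D ≤ G := fun _ _ h => h.1

lemma gdelete_comm : gdelete (gdelete G D) D' = gdelete (gdelete G D') D := by
  ext
  simp only [gdelete_adj]
  tauto

lemma induce_gdelete (h : Disjoint S D) : (gdelete G D).induce S = G.induce S := by
  ext a b
  simp [h.notMem_of_mem_left a.2, h.notMem_of_mem_left b.2]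

lemma isInducedTree_gdelete_singleton_iff (hvS : v ∉ S) :
    IsInducedTree (gdelete G {v}) S ↔ IsInducedTree G S := by
  rw [IsInducedTree, IsInducedTree, induce_gdelete (Set.disjoint_singleton_right.2 hvS)]

lemma reachable_gdelete_of_forall_notMem (p : G.Walk x y) (hp : ∀ z ∈ p.support, z ∉ D) :
    (gdelete G D).Reachable x y := by
  induction p with
  | nil => rfl
  | cons h q ih =>
    simp only [Walk.support_cons, List.mem_cons, forall_eq_or_imp] at hp
    exact (show (gdelete G D).Adj _ _ from ⟨h, hp.1, hp.2 _ q.start_mem_support⟩).reachable.trans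
      (ih hp.2)

lemma eq_of_reachable_gdelete (h : (gdelete G D).Reachable r x) (hx : x ∈ D) : r = x := by
  by_contra hne
  obtain ⟨z, hz⟩ := h.exists_adj_of_ne hne
  exact hz.2.2 hx

lemma reachable_gdelete_singleton_iff (hv : G.neighborSet v ⊆ {u}) (hr : r ≠ v) (hx : x ≠ v) :
    (gdelete G {v}).Reachable r x ↔ G.Reachable r x := by
  refine ⟨fun h => h.mono gdelete_le, fun h => ?_⟩
  obtain ⟨p, hp⟩ := h.exists_isPath
  exact reachable_gdelete_of_forall_notMem p fun z hz hzv =>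
    hp.notMem_support_of_neighborSet_subset hv hr hx (Set.mem_singleton_iff.1 hzv ▸ hz)

lemma reachable_iff_adj_and_reachable (hv : G.neighborSet v ⊆ {u}) (hr : r ≠ v) :
    G.Reachable r v ↔ G.Adj v u ∧ G.Reachable r u := by
  refine ⟨fun h => ?_, fun ⟨hvu, h⟩ => h.trans hvu.symm.reachable⟩
  obtain ⟨z, hz⟩ := h.exists_adj_of_ne hr
  obtain rfl : z = u := hv hz.symm
  exact ⟨hz.symm, h.trans hz.symm.reachable⟩

lemma openNbhd_gdelete_diff_subset : openNbhd (gdelete G D) (S \ D) ⊆ openNbhd G S := by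
  rintro x ⟨hx, y, hy, hxy, hxD, -⟩
  exact ⟨fun hxS => hx ⟨hxS, hxD⟩, y, hy.1, hxy⟩

end Deletion

def reattach (v u : V) (T : Set V) : Set V := {x | x ∈ T ∨ x = v ∧ u ∈ T}

section Reattach

variable {G : SimpleGraph V} {C S T : Set V} {r u v x : V}

lemma mem_reattach : x ∈ reattach v u T ↔ x ∈ T ∨ x = v ∧ u ∈ T := Iff.rfl

lemma reattach_of_mem (hu : u ∈ T) : reattach v u T = insert v T := by
  ext
  simp [mem_reattach, hu, or_comm]

lemma reattach_of_notMem (hu : u ∉ T) : reattach v u T = T := by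
  ext
  simp [mem_reattach, hu]

lemma subset_reattach_diff (hv : G.neighborSet v = {u}) (hC : (G.induce C).Connected)
    (hx : x ∈ C) (hxv : x ≠ v) : C ⊆ reattach v u (C \ {v}) := by
  intro y hy
  by_cases hyv : y = v
  · subst hyv
    obtain ⟨z, hz, hyz⟩ := hC.exists_adj_of_induce hy hx hxv.symm
    obtain rfl : z = u := hv.le hyz
    exact Or.inr ⟨rfl, hz, hyz.ne'⟩
  · exact Or.inl ⟨hy, hyv⟩

lemma reattach_diff_subset (h : u ∈ C → v ∈ C) : reattach v u (C \ {v}) ⊆ C := by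
  rintro y (hy | ⟨rfl, hu, -⟩)
  exacts [hy.1, h hu]

lemma subset_reattach_iff {F F' : Set V} (hvT : v ∉ T)
    (hF'mem : v ∈ F → F' = (F \ {v}) ∪ {u}) (hF'nmem : v ∉ F → F' = F) :
    F ⊆ reattach v u T ↔ F' ⊆ T := by
  by_cases hvF : v ∈ F
  · rw [hF'mem hvF]
    simp only [Set.subset_def, mem_reattach, Set.union_singleton, Set.mem_insert_iff,
      Set.mem_sdiff, Set.mem_singleton_iff]
    grind
  · rw [hF'nmem hvF]
    simp only [Set.subset_def, mem_reattach]
    grind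

lemma isAcyclic_induce_reattach_iff (hv : G.neighborSet v ⊆ {u}) (hvT : v ∉ T) :
    (G.induce (reattach v u T)).IsAcyclic ↔ ((gdelete G {v}).induce T).IsAcyclic := by
  rw [induce_gdelete (Set.disjoint_singleton_right.2 hvT)]
  by_cases hu : u ∈ T
  · rw [reattach_of_mem hu, isAcyclic_induce_insert_iff hv]
  · rw [reattach_of_notMem hu]

lemma isInducedTree_reattach_iff (hv : G.neighborSet v = {u}) (hvT : v ∉ T) :
    IsInducedTree G (reattach v u T) ↔ IsInducedTree (gdelete G {v}) T := by
  rw [IsInducedTree, IsInducedTree, isTree_iff, isTree_iff,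
    isAcyclic_induce_reattach_iff hv.le hvT, induce_gdelete (Set.disjoint_singleton_right.2 hvT)]
  by_cases hu : u ∈ T
  · rw [reattach_of_mem hu, connected_induce_insert_iff hv hu hvT]
  · rw [reattach_of_notMem hu]

lemma openNbhd_reattach (hv : G.neighborSet v = {u}) (hvT : v ∉ T) :
    openNbhd G (reattach v u T) = openNbhd (gdelete G {v}) T := by
  have hadj : ∀ z, G.Adj v z ↔ z = u := fun z => Set.ext_iff.1 hv z
  ext x
  simp only [openNbhd, mem_reattach, gdelete_adj, Set.mem_ofPred_eq, Set.mem_singleton_iff]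
  grind [G.adj_symm, G.loopless]

lemma isInducedTree_gdelete_diff (hv : G.neighborSet v = {u}) (hS : IsInducedTree G S)
    (hx : x ∈ S) (hxv : x ≠ v) : IsInducedTree (gdelete G {v}) (S \ {v}) := by
  by_cases hvS : v ∈ S
  · rw [← isInducedTree_reattach_iff hv (fun h => h.2 rfl),
      (reattach_diff_subset fun _ => hvS).antisymm (subset_reattach_diff hv hS.1 hx hxv)]
    exact hS
  · rwa [Set.sdiff_singleton_eq_self hvS, isInducedTree_gdelete_singleton_iff hvS]

lemma notMem_component_gdelete (hr : r ≠ v) : v ∉ component (gdelete G {v}) S r := fun h =>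
  let ⟨_, hz⟩ := Reachable.exists_adj_of_ne h hr
  hz.1.2.2 rfl

lemma component_eq_reattach (hv : G.neighborSet v = {u}) (hr : r ≠ v) (hrS : r ∉ S)
    (hvS : v ∉ S) : component G S r = reattach v u (component (gdelete G {v}) S r) := by
  have hvu : G.Adj v u := (hv ▸ rfl : u ∈ G.neighborSet v)
  have hK : (gdelete G S).neighborSet v ⊆ {u} := fun z hz => hv.le hz.1
  ext x
  rcases eq_or_ne x v with rfl | hx
  · have hvC := notMem_component_gdelete (G := G) (S := S) hr
    simp only [mem_reattach, hvC, true_and, false_or]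
    simp only [component, Set.mem_ofPred_eq] at hvC ⊢
    rw [gdelete_comm, reachable_iff_adj_and_reachable hK hr,
      reachable_gdelete_singleton_iff hK hr hvu.ne']
    refine and_iff_right_of_imp fun hu => ⟨hvu, hvS, fun huS => hrS ?_⟩
    exact (eq_of_reachable_gdelete hu huS) ▸ huS
  · simp only [component, mem_reattach, Set.mem_ofPred_eq, hx, false_and, or_false]
    rw [gdelete_comm, reachable_gdelete_singleton_iff hK hr hx]

end Reattach

section Weight

variable [Finite V] {w w' : V → ℕ} {S S' T : Set V} {u v x : V}

lemma weight_insert (hx : x ∉ S) : weight w (insert x S) = w x + weight w S :=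
  finsum_mem_insert w hx S.toFinite

lemma weight_add_weight_diff (h : S ⊆ S') : weight w S + weight w (S' \ S) = weight w S' :=
  finsum_mem_add_sdiff h S'.toFinite

lemma weight_mono (h : S ⊆ S') : weight w S ≤ weight w S' :=
  weight_add_weight_diff h ▸ Nat.le_add_right _ _

lemma eq_of_subset_of_weight_le (hw : ∀ x, 0 < w x) (h : S ⊆ S')
    (hle : weight w S' ≤ weight w S) : S = S' := by
  by_contra hne
  obtain ⟨x, hxS', hxS⟩ := Set.exists_of_ssubset (h.ssubset_of_ne hne)
  have hx : w x ≤ weight w (S' \ S) := by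
    have hsub : {x} ⊆ S' \ S := Set.singleton_subset_iff.2 ⟨hxS', hxS⟩
    simpa [weight] using weight_mono (w := w) hsub
  have := weight_add_weight_diff (w := w) h
  have := hw x
  omega

lemma weight_reattach (hvT : v ∉ T) (hw'u : w' u = w u + w v)
    (hw'x : ∀ x, x ≠ u → w' x = w x) : weight w (reattach v u T) = weight w' T := by
  have hcongr : ∀ T', u ∉ T' → weight w' T' = weight w T' := fun T' hu =>
    finsum_mem_congr rfl fun x hx => hw'x x (by rintro rfl; exact hu hx)
  by_cases hu : u ∈ T
  · have huT : u ∉ T \ {u} := fun h => h.2 rfl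
    rw [reattach_of_mem hu, weight_insert hvT, ← Set.insert_sdiff_self_of_mem hu,
      weight_insert huT, weight_insert huT, hcongr _ huT, hw'u]
    ring
  · rw [reattach_of_notMem hu, hcongr T hu]

end Weight

lemma maxset_eq_image [Finite V] {w₁ w₂ : V → ℕ} (hw₂ : ∀ x, 0 < w₂ x) {A B : Set (Set V)}
    {f : Set V → Set V} (hmaps : ∀ T ∈ A, f T ∈ B ∧ weight w₂ (f T) = weight w₁ T)
    (hcover : ∀ S ∈ B, ∃ T ∈ A, S ⊆ f T) : maxset w₂ B = f '' maxset w₁ A := by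
  ext S
  constructor
  · rintro ⟨hS, hmax⟩
    obtain ⟨T, hT, hST⟩ := hcover S hS
    have hST : S = f T := eq_of_subset_of_weight_le hw₂ hST (hmax _ (hmaps T hT).1)
    refine ⟨T, ⟨hT, fun T' hT' => ?_⟩, hST.symm⟩
    rw [← (hmaps T hT).2, ← hST, ← (hmaps T' hT').2]
    exact hmax _ (hmaps T' hT').1
  · rintro ⟨T, ⟨hT, hmax⟩, rfl⟩
    refine ⟨(hmaps T hT).1, fun S hS => ?_⟩
    obtain ⟨T', hT', hST'⟩ := hcover S hS
    calc weight w₂ S ≤ weight w₂ (f T') := weight_mono hST'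
      _ = weight w₁ T' := (hmaps T' hT').2
      _ ≤ weight w₁ T := hmax T' hT'
      _ = weight w₂ (f T) := (hmaps T hT).2.symm

section Descriptions

variable {G : SimpleGraph V} {C T : Set V} {𝒳 : Set (Set V)} {D : V × Set (Set V)}
  {𝔛 : Set (V × Set (Set V))} {r u v x : V}

lemma IsTransversal.notMem (hS : IsTransversal 𝒳 C) (hx : ∀ X ∈ 𝒳, x ∉ X) : x ∉ C := fun h =>
  let ⟨X, hX, hxX⟩ := hS.1 h
  hx X hX hxX

lemma IsDescription.of_gdelete (hv : G.neighborSet v = {u}) (hr : r ≠ v) (h𝒳 : ∀ X ∈ 𝒳, v ∉ X)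
    (h : IsDescription (gdelete G {v}) r 𝒳) : IsDescription G r 𝒳 := by
  refine ⟨h.1, h.2.1, fun S hS => ?_⟩
  have hvC := notMem_component_gdelete (G := G) (S := S) hr
  rw [component_eq_reattach hv hr (hS.notMem h.1) (hS.notMem h𝒳),
    isAcyclic_induce_reattach_iff hv.le hvC, openNbhd_reattach hv hvC]
  exact h.2.2 S hS

lemma describes_reattach_iff (hv : G.neighborSet v = {u}) (hr : D.1 ≠ v) (hvT : v ∉ T) :
    Describes G D (reattach v u T) ↔ Describes (gdelete G {v}) D T := by
  simp only [Describes, openNbhd_reattach hv hvT, mem_reattach, hr, false_and, or_false]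

lemma Describes.gdelete_diff_singleton (hv : G.neighborSet v = {u}) (hC : IsInducedTree G C)
    (hD : Describes G D C) (havoid : D.1 ≠ v ∧ ∀ X ∈ D.2, v ∉ X) :
    reattach v u (C \ {v}) = C ∧ IsInducedTree (gdelete G {v}) (C \ {v}) ∧
      Describes (gdelete G {v}) D (C \ {v}) := by
  have hvu : G.Adj v u := (hv ▸ rfl : u ∈ G.neighborSet v)
  have hvN : v ∉ openNbhd G C := hD.2.notMem havoid.2
  have hCeq : reattach v u (C \ {v}) = C :=
    (reattach_diff_subset fun hu => by_contra fun hvC => hvN ⟨hvC, u, hu, hvu⟩).antisymm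
      (subset_reattach_diff hv hC.1 hD.1 havoid.1)
  have hvT : v ∉ C \ {v} := fun h => h.2 rfl
  rw [← hCeq] at hC hD
  exact ⟨hCeq, (isInducedTree_reattach_iff hv hvT).1 hC,
    (describes_reattach_iff hv havoid.1 hvT).1 hD⟩

lemma NonRedundant.of_gdelete (hv : G.neighborSet v = {u})
    (havoid : ∀ D ∈ 𝔛, D.1 ≠ v ∧ ∀ X ∈ D.2, v ∉ X) (h : NonRedundant (gdelete G {v}) 𝔛) :
    NonRedundant G 𝔛 := fun _ hC D₁ hD₁ D₂ hD₂ h₁ h₂ =>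
  let ⟨_, hT, h₁'⟩ := h₁.gdelete_diff_singleton hv hC (havoid D₁ hD₁)
  h _ hT D₁ hD₁ D₂ hD₂ h₁' (h₂.gdelete_diff_singleton hv hC (havoid D₂ hD₂)).2.2

lemma treesOf_eq_image_reattach (hv : G.neighborSet v = {u})
    (havoid : ∀ D ∈ 𝔛, D.1 ≠ v ∧ ∀ X ∈ D.2, v ∉ X) :
    treesOf G 𝔛 = reattach v u '' treesOf (gdelete G {v}) 𝔛 := by
  ext C
  constructor
  · rintro ⟨hC, D, hD𝔛, hD⟩
    obtain ⟨hCeq, hT, hDT⟩ := hD.gdelete_diff_singleton hv hC (havoid D hD𝔛)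
    exact ⟨C \ {v}, ⟨hT, D, hD𝔛, hDT⟩, hCeq⟩
  · rintro ⟨T, ⟨hT, D, hD𝔛, hD⟩, rfl⟩
    have hvT : v ∉ T := fun hvT => by
      obtain ⟨z, -, hz⟩ := hT.1.exists_adj_of_induce hvT hD.1 (havoid D hD𝔛).1.symm
      exact hz.2.1 rfl
    exact ⟨(isInducedTree_reattach_iff hv hvT).2 hT, D, hD𝔛,
      (describes_reattach_iff hv (havoid D hD𝔛).1 hvT).2 hD⟩

end Descriptions

lemma maxset_secl_eq_image_reattach [Finite V] {G : SimpleGraph V} {w w' : V → ℕ}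
    (hw : ∀ x, 0 < w x) {k : ℕ} {F F' : Set V} (hF : F.Nonempty) {u v : V}
    (hv : G.neighborSet v = {u}) (hFv : F ≠ {v}) (hw'u : w' u = w u + w v)
    (hw'x : ∀ x, x ≠ u → w' x = w x) (hF'mem : v ∈ F → F' = (F \ {v}) ∪ {u})
    (hF'nmem : v ∉ F → F' = F) :
    maxset w (secl G k F) =
      reattach v u '' maxset w' {S ∈ secl (gdelete G {v}) k F' | v ∉ S} := by
  obtain ⟨x, hxF, hxv⟩ : ∃ x ∈ F, x ≠ v := by
    by_contra! h
    exact hFv (hF.subset_singleton_iff.1 h)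
  refine maxset_eq_image hw (fun T ⟨⟨⟨hT, hTk⟩, hF'T⟩, hvT⟩ => ⟨⟨⟨?_, ?_⟩, ?_⟩, ?_⟩) ?_
  · exact (isInducedTree_reattach_iff hv hvT).2 hT
  · rwa [openNbhd_reattach hv hvT]
  · exact (subset_reattach_iff hvT hF'mem hF'nmem).2 hF'T
  · exact weight_reattach hvT hw'u hw'x
  · rintro S ⟨⟨hS, hSk⟩, hFS⟩
    have hvS : v ∉ S \ {v} := fun h => h.2 rfl
    have hSsub := subset_reattach_diff hv hS.1 (hFS hxF) hxv
    refine ⟨S \ {v}, ⟨⟨⟨isInducedTree_gdelete_diff hv hS (hFS hxF) hxv, ?_⟩, ?_⟩, hvS⟩, hSsub⟩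
    · exact (Set.ncard_le_ncard openNbhd_gdelete_diff_subset).trans hSk
    · exact (subset_reattach_iff hvS hF'mem hF'nmem).1 (hFS.trans hSsub)

/-- safeness of contracting a degree-1 vertex: if `𝔛` is a non-redundant
set of descriptions for `G − v` describing exactly the maximum `w'`-weight `k`-secluded
supertrees of `F'` in `G − v`, then `𝔛` is a non-redundant set of descriptions for `G`
describing exactly the maximum `w`-weight `k`-secluded supertrees of `F` in `G`. -/
theorem contract_degree_one_safe [Fintype V] (G : SimpleGraph V) (w : V → ℕ)
    (hw : ∀ x : V, 0 < w x) (k : ℕ) (F : Set V) (hF : F.Nonempty)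
    (v u : V) (hvu : G.neighborSet v = {u}) (hFv : F ≠ {v})
    (w' : V → ℕ) (hw'u : w' u = w u + w v) (hw'x : ∀ x : V, x ≠ u → w' x = w x)
    (F' : Set V) (hF'mem : v ∈ F → F' = (F \ {v}) ∪ {u}) (hF'nmem : v ∉ F → F' = F)
    (𝔛 : Set (V × Set (Set V)))
    (hdesc : ∀ D ∈ 𝔛, IsDescription (gdelete G {v}) D.1 D.2)
    (havoid : ∀ D ∈ 𝔛, D.1 ≠ v ∧ ∀ X ∈ D.2, v ∉ X)
    (hnr : NonRedundant (gdelete G {v}) 𝔛)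
    (hT : treesOf (gdelete G {v}) 𝔛 =
      maxset w' {S ∈ secl (gdelete G {v}) k F' | v ∉ S}) :
    (∀ D ∈ 𝔛, IsDescription G D.1 D.2) ∧ NonRedundant G 𝔛 ∧
      treesOf G 𝔛 = maxset w (secl G k F) := by
  refine ⟨fun D hD => (hdesc D hD).of_gdelete hvu (havoid D hD).1 (havoid D hD).2,
    hnr.of_gdelete hvu havoid, ?_⟩
  rw [treesOf_eq_image_reattach hvu havoid, hT,
    maxset_secl_eq_image_reattach hw hF hvu hFv hw'u hw'x hF'mem hF'nmem]

end Secluded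
end

section
/- Let G be a finite simple graph, let k ≥ 0 be an integer, and let T ⊆ F ⊆ V(G) with T nonempty and G[T] connected. Suppose that every degree-1 vertex u of G satisfies F = {u} (the instance is almost leafless) and that |N_G(T)| > k(k+1). If H is a k-secluded supertree of F in G, then there exists a vertex v ∈ N_G(H) (hence v ∉ F) together with k+2 paths in G, each starting at a vertex of N_G(T), ending at v, containing no vertex of T, and pairwise intersecting only in v. -/
namespace Secluded

open SimpleGraph

variable {V : Type*}

/-!
Every edge of the tree `H` is a bridge. Since `T ⊆ H` induces a connected subgraph, two distinct
neighbours of `T` can therefore not be joined by a walk in `H \ T`; and the endpoint of a path in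
`H \ T` that starts next to `T` has, besides its predecessor, a neighbour off the path and outside
`T`, because it is not a leaf. So a longest such path leaves `H`: every `s ∈ N_G(T)` has an escape
path to some vertex of `N_G(H)` (the trivial one if `s ∉ H`), and escape paths of distinct
vertices meet only at their ends. As `|N_G(H)| ≤ k < |N_G(T)| / (k + 1)`, by pigeonhole `k + 2`
escape paths end at the same vertex `v`.
-/

lemma exists_embedding_fiber {α β : Type*} [Fintype α] [Fintype β] (f : α → β) {n : ℕ}
    (h : Fintype.card β * n < Fintype.card α) : ∃ y, Nonempty (Fin (n + 1) ↪ {x // f x = y}) := by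
  classical
  obtain ⟨y, hy⟩ := Fintype.exists_lt_card_fiber_of_mul_lt_card f h
  refine ⟨y, Function.Embedding.nonempty_of_card_le ?_⟩
  simpa [Fintype.card_subtype, Nat.succ_le_iff] using hy

lemma degOf_ne_one_of_notMem {G : SimpleGraph V} {T F : Set V} (hTF : T ⊆ F) (hT : T.Nonempty)
    (hleaf : ∀ u, degOf G u = 1 → F = {u}) {x : V} (hx : x ∉ T) : degOf G x ≠ 1 := fun hdeg => by
  obtain ⟨t, ht⟩ := hT
  have htx : t = x := by simpa [hleaf x hdeg] using hTF ht
  exact hx (htx ▸ ht)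

section Forest

variable {G : SimpleGraph V} {H T : Set V}

lemma mem_edges_of_isAcyclic_induce (hH : (G.induce H).IsAcyclic) {u v : V} (huv : G.Adj u v)
    (p : G.Walk u v) (hpH : ∀ x ∈ p.support, x ∈ H) : s(u, v) ∈ p.edges := by
  have hbridge := isAcyclic_iff_forall_adj_isBridge.mp hH (induce_adj.2 huv :
    (G.induce H).Adj ⟨u, hpH u p.start_mem_support⟩ ⟨v, hpH v p.end_mem_support⟩)
  have hmem := List.mem_map_of_mem (f := Sym2.map (Embedding.induce (G := G) H).toHom)
    (isBridge_iff_forall_walk_mem_edges.mp hbridge (p.induce H hpH))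
  rwa [← Walk.edges_map, Walk.map_induce] at hmem

lemma eq_of_adj_of_walk_of_isAcyclic_induce (hH : (G.induce H).IsAcyclic) {y z ℓ : V}
    (hℓ : ℓ ∈ H) (hy : G.Adj y ℓ) (hz : G.Adj z ℓ) (p : G.Walk y z)
    (hpH : ∀ x ∈ p.support, x ∈ H \ {ℓ}) : y = z := by
  have hedge := mem_edges_of_isAcyclic_induce hH hy (p.concat hz) fun x hx => by
    rw [Walk.support_concat, List.mem_append, List.mem_singleton] at hx
    rcases hx with hx | rfl
    exacts [(hpH x hx).1, hℓ]
  rw [Walk.edges_concat, List.concat_eq_append, List.mem_append, List.mem_singleton] at hedge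
  rcases hedge with hedge | hedge
  · exact absurd rfl (hpH ℓ (p.snd_mem_support_of_mem_edges hedge)).2
  · simpa [hy.ne] using hedge

lemma exists_walk_of_connected_induce (hT : (G.induce T).Connected) {t t' : V} (ht : t ∈ T)
    (ht' : t' ∈ T) : ∃ p : G.Walk t t', ∀ x ∈ p.support, x ∈ T := by
  obtain ⟨q⟩ := hT.preconnected ⟨t, ht⟩ ⟨t', ht'⟩
  have hqT : ∀ x ∈ (q.map (Embedding.induce T).toHom).support, x ∈ T := by
    intro x hx
    rw [Walk.support_map, List.mem_map] at hx
    obtain ⟨x, -, rfl⟩ := hx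
    exact x.2
  exact ⟨_, hqT⟩

lemma eq_of_walk_diff_of_adj (hH : (G.induce H).IsAcyclic) (hT : (G.induce T).Connected)
    (hTH : T ⊆ H) {s s' t t' : V} (ht : t ∈ T) (ht' : t' ∈ T) (hst : G.Adj s t)
    (hs't' : G.Adj s' t') (p : G.Walk s s') (hpH : ∀ x ∈ p.support, x ∈ H \ T) : s = s' := by
  obtain ⟨r, hrT⟩ := exists_walk_of_connected_induce hT ht' ht
  have hedge := mem_edges_of_isAcyclic_induce hH hst (p.append (.cons hs't' r)) fun x hx => by
    rw [Walk.mem_support_append_iff, Walk.support_cons, List.mem_cons] at hx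
    rcases hx with hx | rfl | hx
    exacts [(hpH x hx).1, (hpH x p.end_mem_support).1, hTH (hrT x hx)]
  rw [Walk.edges_append, Walk.edges_cons, List.mem_append, List.mem_cons, Sym2.eq_iff] at hedge
  rcases hedge with hedge | (⟨hss', -⟩ | ⟨hst', -⟩) | hedge
  · exact absurd ht (hpH t (p.snd_mem_support_of_mem_edges hedge)).2
  · exact hss'
  · exact absurd (hst' ▸ ht') (hpH s p.start_mem_support).2
  · exact absurd (hrT s (r.fst_mem_support_of_mem_edges hedge)) (hpH s p.start_mem_support).2

lemma exists_adj_notMem_support (hH : (G.induce H).IsAcyclic) (hT : (G.induce T).Connected)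
    (hTH : T ⊆ H) {s t₀ ℓ : V} (ht₀ : t₀ ∈ T) (hst₀ : G.Adj s t₀) {p : G.Walk s ℓ}
    (hp : p.IsPath) (hpH : ∀ x ∈ p.support, x ∈ H \ T) (hdeg : degOf G ℓ ≠ 1) :
    ∃ y, G.Adj ℓ y ∧ y ∉ T ∧ y ∉ p.support := by
  classical
  -- Otherwise every neighbour of `ℓ` lies in `T` or on `p`, so it is joined to `t₀` in `H \ {ℓ}`;
  -- acyclicity then makes it the predecessor of `ℓ` on `t₀ :: p`, and `ℓ` would be a leaf.
  by_contra! hclosed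
  have hℓ : ℓ ∈ H \ T := hpH ℓ p.end_mem_support
  let w : G.Walk t₀ ℓ := .cons hst₀.symm p
  have hw : w.IsPath := hp.cons fun h => (hpH t₀ h).2 ht₀
  have hwH : ∀ x ∈ w.support, x ∈ H := by
    intro x hx
    rcases List.mem_cons.mp hx with rfl | hx
    exacts [hTH ht₀, (hpH x hx).1]
  have hreach : ∀ u, G.Adj u ℓ → ∃ r : G.Walk u t₀, ∀ x ∈ r.support, x ∈ H \ {ℓ} := by
    intro u hu
    by_cases huT : u ∈ T
    · obtain ⟨r, hrT⟩ := exists_walk_of_connected_induce hT huT ht₀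
      exact ⟨r, fun x hx => ⟨hTH (hrT x hx), fun h => hℓ.2 (h ▸ hrT x hx)⟩⟩
    · have huw : u ∈ w.support := List.mem_cons_of_mem _ (hclosed u hu.symm huT)
      refine ⟨(w.takeUntil u huw).reverse, fun x hx => ?_⟩
      rw [Walk.support_reverse, List.mem_reverse] at hx
      refine ⟨hwH x (w.support_takeUntil_subset_support huw hx), ?_⟩
      rintro rfl
      exact Walk.endpoint_notMem_support_takeUntil hw huw hu.ne' hx
  have hpen : G.Adj w.penultimate ℓ := w.adj_penultimate Walk.not_nil_cons
  obtain ⟨r₀, hr₀⟩ := hreach _ hpen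
  have hleaf : G.neighborSet ℓ = {w.penultimate} := by
    ext y
    refine ⟨fun hy => ?_, fun hy => hy ▸ hpen.symm⟩
    obtain ⟨r, hr⟩ := hreach y (G.adj_symm hy)
    refine eq_of_adj_of_walk_of_isAcyclic_induce hH hℓ.1 (G.adj_symm hy) hpen
      (r.append r₀.reverse) fun x hx => ?_
    rw [Walk.mem_support_append_iff, Walk.support_reverse, List.mem_reverse] at hx
    exact hx.elim (hr x) (hr₀ x)
  exact hdeg (by rw [degOf, hleaf, Set.ncard_singleton])

lemma exists_path_diff_adj_notMem [Fintype V] (hH : (G.induce H).IsAcyclic)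
    (hT : (G.induce T).Connected) (hTH : T ⊆ H) (hdeg : ∀ x ∉ T, degOf G x ≠ 1) {s t₀ : V}
    (hs : s ∈ H \ T) (ht₀ : t₀ ∈ T) (hst₀ : G.Adj s t₀) :
    ∃ ℓ v, ∃ p : G.Walk s ℓ, p.IsPath ∧ (∀ x ∈ p.support, x ∈ H \ T) ∧ G.Adj ℓ v ∧ v ∉ H := by
  by_contra! hstuck
  have hlong : ∀ n, ∃ ℓ, ∃ p : G.Walk s ℓ,
      p.IsPath ∧ (∀ x ∈ p.support, x ∈ H \ T) ∧ p.length = n := by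
    intro n
    induction n with
    | zero => exact ⟨s, .nil, .nil, by simpa using hs, rfl⟩
    | succ n ih =>
      obtain ⟨ℓ, p, hp, hpH, rfl⟩ := ih
      obtain ⟨y, hy, hyT, hyp⟩ := exists_adj_notMem_support hH hT hTH ht₀ hst₀ hp hpH
        (hdeg ℓ (hpH ℓ p.end_mem_support).2)
      refine ⟨y, p.concat hy, hp.concat hyp hy, fun x hx => ?_, by simp⟩
      rw [Walk.support_concat, List.mem_append, List.mem_singleton] at hx
      rcases hx with hx | rfl
      exacts [hpH x hx, ⟨hstuck ℓ x p hp hpH hy, hyT⟩]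
  obtain ⟨ℓ, p, hp, -, hlen⟩ := hlong (Fintype.card V)
  exact (hlen ▸ hp.length_lt).false

lemma exists_escape_path [Fintype V] (hH : (G.induce H).IsAcyclic)
    (hT : (G.induce T).Connected) (hTH : T ⊆ H) (hdeg : ∀ x ∉ T, degOf G x ≠ 1) {s : V}
    (hs : s ∈ openNbhd G T) :
    ∃ v ∈ openNbhd G H, ∃ P : G.Walk s v, P.IsPath ∧ ∀ x ∈ P.support, x = v ∨ x ∈ H \ T := by
  obtain ⟨hsT, t₀, ht₀, hst₀⟩ := hs
  by_cases hsH : s ∈ H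
  · obtain ⟨ℓ, v, p, hp, hpH, hℓv, hvH⟩ :=
      exists_path_diff_adj_notMem hH hT hTH hdeg ⟨hsH, hsT⟩ ht₀ hst₀
    refine ⟨v, ⟨hvH, ℓ, (hpH ℓ p.end_mem_support).1, hℓv.symm⟩, p.concat hℓv,
      hp.concat (fun hv => hvH (hpH v hv).1) hℓv, fun x hx => ?_⟩
    rw [Walk.support_concat, List.mem_append, List.mem_singleton] at hx
    exact hx.symm.imp id (hpH x)
  · exact ⟨s, ⟨hsH, t₀, hTH ht₀, hst₀⟩, .nil, .nil, by simp⟩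

lemma escape_paths_meet_at_ends (hH : (G.induce H).IsAcyclic) (hT : (G.induce T).Connected)
    (hTH : T ⊆ H) {s s' v v' x : V} (hs : s ∈ openNbhd G T) (hs' : s' ∈ openNbhd G T)
    (hss' : s ≠ s') {P : G.Walk s v} {P' : G.Walk s' v'} (hP : P.IsPath) (hP' : P'.IsPath)
    (hPH : ∀ y ∈ P.support, y = v ∨ y ∈ H \ T) (hP'H : ∀ y ∈ P'.support, y = v' ∨ y ∈ H \ T)
    (hx : x ∈ P.support) (hx' : x ∈ P'.support) : x = v ∨ x = v' := by
  classical
  by_contra! hxv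
  have hprefix : ∀ {a b : V} {Q : G.Walk a b}, Q.IsPath → (∀ y ∈ Q.support, y = b ∨ y ∈ H \ T) →
      (hxQ : x ∈ Q.support) → x ≠ b → ∀ y ∈ (Q.takeUntil x hxQ).support, y ∈ H \ T := by
    intro a b Q hQ hQH hxQ hxb y hy
    refine (hQH y (Q.support_takeUntil_subset_support hxQ hy)).resolve_left ?_
    rintro rfl
    exact Walk.endpoint_notMem_support_takeUntil hQ hxQ hxb.symm hy
  obtain ⟨-, t, ht, hst⟩ := hs
  obtain ⟨-, t', ht', hs't'⟩ := hs'
  refine hss' (eq_of_walk_diff_of_adj hH hT hTH ht ht' hst hs't'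
    ((P.takeUntil x hx).append (P'.takeUntil x hx').reverse) fun y hy => ?_)
  rw [Walk.mem_support_append_iff, Walk.support_reverse, List.mem_reverse] at hy
  exact hy.elim (hprefix hP hPH hx hxv.1 y) (hprefix hP' hP'H hx' hxv.2 y)

end Forest

/-- in an almost leafless instance with `|N_G(T)| > k(k+1)`, for every
`k`-secluded supertree `H` of `F` in `G` there exists a vertex `v ∈ N_G(H)` (hence
`v ∉ F`) together with `k+2` paths from `N_G(T)` to `v` avoiding `T` and pairwise
intersecting only in `v`. -/
theorem exists_flower_vertex [Fintype V] (G : SimpleGraph V) (k : ℕ)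
    (T F : Set V) (hTF : T ⊆ F) (hT : T.Nonempty)
    (hTconn : (G.induce T).Connected)
    (hleaf : ∀ u : V, degOf G u = 1 → F = {u})
    (hbig : k * (k + 1) < (openNbhd G T).ncard)
    (H : Set V) (hH : H ∈ secl G k F) :
    ∃ v ∈ openNbhd G H, v ∉ F ∧
      ∃ (s : Fin (k + 2) → V) (P : (i : Fin (k + 2)) → G.Walk (s i) v),
        (∀ i, s i ∈ openNbhd G T) ∧
        (∀ i, (P i).IsPath) ∧
        (∀ i, ∀ x ∈ (P i).support, x ∉ T) ∧
        (∀ i j, i ≠ j → ∀ x, x ∈ (P i).support → x ∈ (P j).support → x = v) := by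
  classical
  obtain ⟨⟨hHtree, hHk⟩, hFH⟩ := hH
  have hTH : T ⊆ H := hTF.trans hFH
  have hdeg : ∀ x ∉ T, degOf G x ≠ 1 := fun x => degOf_ne_one_of_notMem hTF hT hleaf
  choose f hf P hP hPH using fun s : openNbhd G T =>
    exists_escape_path hHtree.isAcyclic hTconn hTH hdeg s.2
  obtain ⟨⟨v, hv⟩, ⟨e⟩⟩ := exists_embedding_fiber (fun s => (⟨f s, hf s⟩ : openNbhd G H))
    (n := k + 1) (by
      simpa only [Set.fintypeCard_eq_ncard] using
        (Nat.mul_le_mul_right (k + 1) hHk).trans_lt hbig)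
  have hev : ∀ i, f (e i).1 = v := fun i => congrArg Subtype.val (e i).2
  refine ⟨v, hv, fun hvF => hv.1 (hFH hvF), fun i => (e i).1, fun i => (P (e i).1).copy rfl (hev i),
    fun i => (e i).1.2, fun i => by simpa using hP (e i).1, fun i x hx => ?_,
    fun i j hij x hxi hxj => ?_⟩
  · rw [Walk.support_copy] at hx
    rcases hPH (e i).1 x hx with rfl | hx
    exacts [fun hxT => hv.1 (hev i ▸ hTH hxT), hx.2]
  · rw [Walk.support_copy] at hxi hxj
    have hne : ((e i).1 : V) ≠ (e j).1 := fun h => hij (e.injective (Subtype.ext (Subtype.ext h)))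
    rcases escape_paths_meet_at_ends hHtree.isAcyclic hTconn hTH (e i).1.2 (e j).1.2 hne (hP _)
      (hP _) (hPH _) (hPH _) hxi hxj with h | h
    exacts [h.trans (hev i), h.trans (hev j)]

end Secluded
end

section
/- Let G be a finite connected simple graph with positive vertex weights w, let k ≥ 0 be an integer, and let T ⊆ F ⊆ V(G) with T nonempty, G[T] connected, and N_G(F) ≠ ∅. Suppose every degree-1 vertex u of G satisfies F = {u} (the instance is almost leafless). Let P = (v₁, v₂, …, v_ℓ) be a path in G disjoint from T with v₁ ∈ N_G(T), deg_G(v_i) = 2 for every 1 ≤ i < ℓ, and such that v_ℓ ∈ N_G(T) or deg_G(v_ℓ) > 2. Then for every maximum-weight k-secluded supertree H of F in G, exactly one of the following holds: (1) v_ℓ ∈ N_G(H) (so v_ℓ ∉ F); (2) |N_G(H) ∩ (V(P) \ (F ∪ {v_ℓ}))| = 1 and v_ℓ ∈ V(H); (3) V(P) ⊆ V(H). -/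
/-!
If `H` is a maximum-weight `k`-secluded supertree of `F` and a degree-2 vertex `z` lies in `N(H)`,
then both neighbours of `z` lie in `H`: otherwise `H + z` is again a tree (`z` has one neighbour
in `H`), its neighbourhood trades `z` for at most one new vertex, and it is heavier.

Walk along `P` from `T ⊆ H`. The first vertex of `P` missing from `H` lies in `N(H)`; if it is
not `v_ℓ`, its successor is in `H`. No later vertex of `P` is missing: the part of `H` strictly
between two missing vertices of the degree-2 path would be closed under adjacency in `H`, so the
connected `H` would lie inside `P`, missing `T`. So either `V(P) ⊆ H` or exactly one vertex of
`P`, not `v_ℓ`, is missing from `H`, and it is the unique vertex of `N(H)` on `P`.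
-/

namespace Secluded

open SimpleGraph

variable {V : Type*}

section

variable {G : SimpleGraph V}

lemma isAcyclic_induce_iff {s : Set V} :
    (G.induce s).IsAcyclic ↔ ∀ u (c : G.Walk u u), c.IsCycle → ¬ ∀ x ∈ c.support, x ∈ s := by
  have hinj : Function.Injective (Embedding.induce (G := G) s).toHom :=
    (Embedding.induce (G := G) s).injective
  constructor
  · intro hs u c hc hcs
    refine hs (c.induce s hcs) ?_
    rwa [← Walk.isCycle_map_iff_of_injective hinj, Walk.map_induce]
  · intro hs ⟨u, hu⟩ c hc
    refine hs _ (c.map (Embedding.induce s).toHom)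
      ((Walk.isCycle_map_iff_of_injective hinj).mpr hc) ?_
    simp only [Walk.support_map, List.mem_map]
    rintro _ ⟨y, -, rfl⟩
    exact y.2

/-- A cycle through `z` uses two distinct neighbours of `z`, which must both lie in `S`. -/
lemma isAcyclic_induce_insert {S : Set V} {z : V} (hS : (G.induce S).IsAcyclic)
    (hz : (G.neighborSet z ∩ S).Subsingleton) : (G.induce (insert z S)).IsAcyclic := by
  classical
  rw [isAcyclic_induce_iff] at hS ⊢
  intro u c hc hcS
  by_cases hzc : z ∈ c.support
  · have hc' := hc.rotate hzc
    have hmem : ∀ x ∈ (c.rotate z hzc).support, G.Adj z x → x ∈ G.neighborSet z ∩ S :=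
      fun x hx hzx => ⟨hzx, (hcS x ((Walk.mem_support_rotate_iff c z hzc).mp hx)).resolve_left
        hzx.ne'⟩
    have hnil : ¬ (c.rotate z hzc).Nil := hc'.not_nil
    exact hc'.snd_ne_penultimate (hz (hmem _ (Walk.getVert_mem_support _ 1) (Walk.adj_snd hnil))
      (hmem _ (Walk.getVert_mem_support _ _) (Walk.adj_penultimate hnil).symm))
  · exact hS u c hc fun x hx => (hcS x hx).resolve_left (ne_of_mem_of_not_mem hx hzc)

lemma isInducedTree_insert {S : Set V} {z : V} (hS : IsInducedTree G S)
    (hz : z ∈ openNbhd G S) (hzS : (G.neighborSet z ∩ S).Subsingleton) :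
    IsInducedTree G (insert z S) := by
  obtain ⟨-, a, ha, hza⟩ := hz
  have hunion : {z, a} ∪ S = insert z S := by
    rw [Set.insert_union, Set.singleton_union, Set.insert_eq_of_mem ha]
  refine ⟨?_, isAcyclic_induce_insert hS.isAcyclic hzS⟩
  rw [← hunion]
  exact induce_union_connected (induce_pair_connected_of_adj hza).preconnected
    hS.connected.preconnected ⟨a, by simp, ha⟩

lemma openNbhd_insert_subset (S : Set V) (z : V) :
    openNbhd G (insert z S) ⊆ (openNbhd G S \ {z}) ∪ (G.neighborSet z \ S) := by
  rintro y ⟨hy, u, hu, hyu⟩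
  rw [Set.mem_insert_iff, not_or] at hy
  rcases hu with rfl | hu
  · exact Or.inr ⟨hyu.symm, hy.2⟩
  · exact Or.inl ⟨⟨hy.2, u, hu, hyu⟩, hy.1⟩

lemma ncard_openNbhd_insert_le [Finite V] {S : Set V} {z : V} (hz : z ∈ openNbhd G S)
    (hzS : (G.neighborSet z \ S).Subsingleton) :
    (openNbhd G (insert z S)).ncard ≤ (openNbhd G S).ncard :=
  calc (openNbhd G (insert z S)).ncard
      ≤ ((openNbhd G S \ {z}) ∪ (G.neighborSet z \ S)).ncard :=
        Set.ncard_le_ncard (openNbhd_insert_subset S z)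
    _ ≤ (openNbhd G S \ {z}).ncard + (G.neighborSet z \ S).ncard := Set.ncard_union_le _ _
    _ ≤ (openNbhd G S \ {z}).ncard + 1 := by
        gcongr
        exact Set.ncard_le_one_iff_subsingleton.mpr hzS
    _ = (openNbhd G S).ncard := Set.ncard_sdiff_singleton_add_one hz

lemma insert_mem_secl [Finite V] {k : ℕ} {F H : Set V} {z : V} (hH : H ∈ secl G k F)
    (hz : z ∈ openNbhd G H) (hzin : (G.neighborSet z ∩ H).Subsingleton)
    (hzout : (G.neighborSet z \ H).Subsingleton) : insert z H ∈ secl G k F :=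
  ⟨⟨isInducedTree_insert hH.1.1 hz hzin, (ncard_openNbhd_insert_le hz hzout).trans hH.1.2⟩,
    hH.2.trans (Set.subset_insert z H)⟩

lemma weight_insert_s9 [Finite V] (w : V → ℕ) {S : Set V} {z : V} (hz : z ∉ S) :
    weight w (insert z S) = w z + weight w S :=
  finsum_mem_insert w hz (Set.toFinite S)

lemma neighborSet_eq_pair_of_degOf_eq_two {z x y : V} (hdeg : degOf G z = 2) (hx : G.Adj z x)
    (hy : G.Adj z y) (hxy : x ≠ y) : G.neighborSet z = {x, y} := by
  have hfin : (G.neighborSet z).Finite :=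
    Set.finite_of_ncard_ne_zero (by rw [← degOf, hdeg]; simp)
  refine (Set.eq_of_subset_of_ncard_le ?_ ?_ hfin).symm
  · rintro _ (rfl | rfl) <;> assumption
  · rw [← degOf, hdeg, Set.ncard_pair hxy]

lemma neighborSet_subset_of_mem_maxset [Finite V] {w : V → ℕ} (hw : ∀ x, 0 < w x) {k : ℕ}
    {F H : Set V} (hH : H ∈ maxset w (secl G k F)) {z : V} (hz : z ∈ openNbhd G H)
    (hdeg : degOf G z = 2) : G.neighborSet z ⊆ H := by
  intro x hzx
  by_contra hxH
  obtain ⟨hzH, u, huH, hzu⟩ := hz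
  have hpair := neighborSet_eq_pair_of_degOf_eq_two hdeg hzu hzx (ne_of_mem_of_not_mem huH hxH)
  have hins : insert z H ∈ secl G k F := by
    refine insert_mem_secl hH.1 ⟨hzH, u, huH, hzu⟩ ?_ ?_ <;> rw [hpair]
    · refine (Set.subsingleton_singleton (a := u)).anti ?_
      rintro y ⟨rfl | rfl, hy⟩
      exacts [rfl, absurd hy hxH]
    · refine (Set.subsingleton_singleton (a := x)).anti ?_
      rintro y ⟨rfl | rfl, hy⟩
      exacts [absurd huH hy, rfl]
  have hle := hH.2 _ hins
  rw [weight_insert_s9 w hzH] at hle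
  have := hw z
  omega

lemma subset_of_closed_under_adj {H Q : Set V} (hH : (G.induce H).Preconnected)
    (hQ : ∀ z ∈ Q, ∀ y ∈ H, G.Adj z y → y ∈ Q) {x : V} (hxH : x ∈ H) (hxQ : x ∈ Q) :
    H ⊆ Q := by
  intro y hy
  obtain ⟨p⟩ := hH ⟨x, hxH⟩ ⟨y, hy⟩
  suffices ∀ {a b : H} (p : (G.induce H).Walk a b), a.1 ∈ Q → b.1 ∈ Q from this p hxQ
  intro a b p
  induction p with
  | nil => exact id
  | cons h _ ih => exact fun ha => ih (hQ _ ha _ (Subtype.prop _) h)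

/-- The interior vertices `v_i`, `a < i < b`, have no neighbours off the path, so a connected `H`
through one of them would stay among them and miss `t`. -/
lemma getVert_notMem_of_lt_of_lt {u v : V} {P : G.Walk u v} (hP : P.IsPath)
    (hdeg : ∀ i < P.length, degOf G (P.getVert i) = 2) {H : Set V}
    (hH : (G.induce H).Preconnected) {t : V} (ht : t ∈ H) (htP : t ∉ P.support)
    {a b : ℕ} (hb : b ≤ P.length) (ha : P.getVert a ∉ H) (hbH : P.getVert b ∉ H)
    {m : ℕ} (ham : a < m) (hmb : m < b) : P.getVert m ∉ H := by
  intro hm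
  let Q : Set V := {z | ∃ i, a < i ∧ i < b ∧ P.getVert i = z}
  have hQ : ∀ z ∈ Q, ∀ y ∈ H, G.Adj z y → y ∈ Q := by
    rintro _ ⟨i, hai, hib, rfl⟩ y hy hzy
    obtain ⟨j, rfl⟩ : ∃ j, i = j + 1 := ⟨i - 1, by omega⟩
    have hne : P.getVert j ≠ P.getVert (j + 1 + 1) := fun h => by
      have := hP.getVert_injOn (by simp only [Set.mem_ofPred_eq]; omega)
        (by simp only [Set.mem_ofPred_eq]; omega) h
      omega
    have hpair := neighborSet_eq_pair_of_degOf_eq_two (hdeg _ (by omega))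
      (P.adj_getVert_succ (by omega)).symm (P.adj_getVert_succ (by omega)) hne
    have hy' : y ∈ ({P.getVert j, P.getVert (j + 1 + 1)} : Set V) := hpair ▸ hzy
    rcases hy' with rfl | rfl
    · exact ⟨j, lt_of_le_of_ne (by omega) (by rintro rfl; exact ha hy), by omega, rfl⟩
    · exact ⟨j + 1 + 1, by omega, lt_of_le_of_ne (by omega) (by rintro rfl; exact hbH hy), rfl⟩
  obtain ⟨i, -, -, rfl⟩ := subset_of_closed_under_adj hH hQ hm ⟨m, ham, hmb, rfl⟩ ht
  exact htP (P.getVert_mem_support i)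

lemma exists_single_gap {u v : V} {P : G.Walk u v} (hP : P.IsPath)
    (hdeg : ∀ i < P.length, degOf G (P.getVert i) = 2) {H : Set V}
    (hH : (G.induce H).Preconnected)
    (hsat : ∀ z ∈ openNbhd G H, degOf G z = 2 → G.neighborSet z ⊆ H)
    {t : V} (ht : t ∈ H) (htP : t ∉ P.support) (hut : G.Adj u t)
    (hv : v ∉ openNbhd G H) (hPH : ¬ {y | y ∈ P.support} ⊆ H) :
    ∃ z ∈ openNbhd G H, z ∈ P.support ∧ z ≠ v ∧ ∀ y ∈ P.support, y ≠ z → y ∈ H := by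
  classical
  have hex : ∃ i, i ≤ P.length ∧ P.getVert i ∉ H := by
    obtain ⟨y, hy, hyH⟩ := Set.not_subset.mp hPH
    obtain ⟨i, rfl, hi⟩ := P.mem_support_iff_exists_getVert.mp hy
    exact ⟨i, hi, hyH⟩
  obtain ⟨i₀, ⟨hi₀n, hi₀H⟩, hmin⟩ : ∃ i, (i ≤ P.length ∧ P.getVert i ∉ H) ∧
      ∀ j < i, ¬ (j ≤ P.length ∧ P.getVert j ∉ H) :=
    ⟨Nat.find hex, Nat.find_spec hex, fun _ => Nat.find_min hex⟩
  have hbefore : ∀ j < i₀, P.getVert j ∈ H := fun j hj => by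
    by_contra h
    exact hmin j hj ⟨by omega, h⟩
  have hi₀N : P.getVert i₀ ∈ openNbhd G H := by
    refine ⟨hi₀H, ?_⟩
    rcases i₀ with _ | j
    · exact ⟨t, ht, by rwa [P.getVert_zero]⟩
    · exact ⟨_, hbefore j j.lt_succ_self, (P.adj_getVert_succ (by omega)).symm⟩
  have hi₀v : P.getVert i₀ ≠ v := fun h => hv (h ▸ hi₀N)
  have hi₀lt : i₀ < P.length := lt_of_le_of_ne hi₀n fun h => hi₀v (h ▸ P.getVert_length)
  have hnext : P.getVert (i₀ + 1) ∈ H :=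
    hsat _ hi₀N (hdeg i₀ hi₀lt) (P.adj_getVert_succ hi₀lt)
  have hafter : ∀ j, i₀ < j → j ≤ P.length → P.getVert j ∈ H := by
    intro j hj hjn
    by_contra hjH
    rcases (Nat.succ_le_of_lt hj).eq_or_lt with rfl | hlt
    · exact hjH hnext
    · exact getVert_notMem_of_lt_of_lt hP hdeg hH ht htP hjn hi₀H hjH i₀.lt_succ_self hlt hnext
  refine ⟨_, hi₀N, P.getVert_mem_support _, hi₀v, fun y hy hne => ?_⟩
  obtain ⟨j, rfl, hj⟩ := P.mem_support_iff_exists_getVert.mp hy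
  rcases lt_trichotomy j i₀ with hlt | rfl | hgt
  · exact hbefore j hlt
  · exact absurd rfl hne
  · exact hafter j hgt hj

end

theorem three_way_branching_general [Fintype V] (G : SimpleGraph V)
    (w : V → ℕ) (hw : ∀ x : V, 0 < w x) (k : ℕ)
    (T F : Set V) (hTF : T ⊆ F)
    (v1 vl : V) (P : G.Walk v1 vl) (hP : P.IsPath)
    (VP : Set V) (hVP : VP = {z | z ∈ P.support})
    (hPT : Disjoint VP T)
    (hv1 : v1 ∈ openNbhd G T)
    (hdeg2 : ∀ z ∈ VP, z ≠ vl → degOf G z = 2)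
    (H : Set V) (hH : H ∈ maxset w (secl G k F)) :
    (vl ∈ openNbhd G H ∧
        ¬((openNbhd G H ∩ (VP \ (F ∪ {vl}))).ncard = 1 ∧ vl ∈ H) ∧ ¬(VP ⊆ H)) ∨
      (vl ∉ openNbhd G H ∧
        ((openNbhd G H ∩ (VP \ (F ∪ {vl}))).ncard = 1 ∧ vl ∈ H) ∧ ¬(VP ⊆ H)) ∨
      (vl ∉ openNbhd G H ∧
        ¬((openNbhd G H ∩ (VP \ (F ∪ {vl}))).ncard = 1 ∧ vl ∈ H) ∧ VP ⊆ H) := by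
  subst hVP
  have hFH : F ⊆ H := hH.1.2
  have hvlP : vl ∈ P.support := P.end_mem_support
  by_cases hvlN : vl ∈ openNbhd G H
  · exact Or.inl ⟨hvlN, fun h => hvlN.1 h.2, fun h => hvlN.1 (h hvlP)⟩
  refine Or.inr ?_
  by_cases hPH : {z | z ∈ P.support} ⊆ H
  · refine Or.inr ⟨hvlN, fun ⟨hcard, _⟩ => ?_, hPH⟩
    obtain ⟨y, hyN, hyP, -⟩ := Set.nonempty_of_ncard_ne_zero (hcard ▸ one_ne_zero)
    exact hyN.1 (hPH hyP)
  obtain ⟨-, t, htT, hv1t⟩ := hv1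
  have hdeg : ∀ i < P.length, degOf G (P.getVert i) = 2 := fun i hi =>
    hdeg2 _ (P.getVert_mem_support i) ((hP.getVert_eq_end_iff hi.le).not.mpr hi.ne)
  obtain ⟨z, hzN, hzP, hzvl, hrest⟩ := exists_single_gap hP hdeg hH.1.1.1.connected.preconnected
    (fun z hz => neighborSet_subset_of_mem_maxset hw hH hz) (hFH (hTF htT))
    (Set.disjoint_right.mp hPT htT) hv1t hvlN hPH
  have hgap : openNbhd G H ∩ ({y | y ∈ P.support} \ (F ∪ {vl})) = {z} := by
    refine Set.eq_singleton_iff_unique_mem.mpr ⟨⟨hzN, hzP, ?_⟩, ?_⟩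
    · rintro (hzF | rfl)
      exacts [hzN.1 (hFH hzF), hzvl rfl]
    · rintro y ⟨hyN, hyP, -⟩
      by_contra hyz
      exact hyN.1 (hrest y hyP hyz)
  exact Or.inl ⟨hvlN, ⟨by rw [hgap, Set.ncard_singleton], hrest vl hvlP hzvl.symm⟩, hPH⟩

/-- three-way branching: for a maximal degree-2 path `P = (v₁, …, v_ℓ)`
growing out of `T`, every maximum-weight `k`-secluded supertree `H` of `F` satisfies
exactly one of: (1) `v_ℓ ∈ N_G(H)`; (2) `|N_G(H) ∩ (V(P) \ (F ∪ {v_ℓ}))| = 1` and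
`v_ℓ ∈ V(H)`; (3) `V(P) ⊆ V(H)`. -/
theorem three_way_branching [Fintype V] (G : SimpleGraph V) (hGconn : G.Connected)
    (w : V → ℕ) (hw : ∀ x : V, 0 < w x) (k : ℕ)
    (T F : Set V) (hTF : T ⊆ F) (hT : T.Nonempty)
    (hTconn : (G.induce T).Connected)
    (hNF : (openNbhd G F).Nonempty)
    (hleaf : ∀ u : V, degOf G u = 1 → F = {u})
    (v1 vl : V) (P : G.Walk v1 vl) (hP : P.IsPath)
    (VP : Set V) (hVP : VP = {z | z ∈ P.support})
    (hPT : Disjoint VP T)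
    (hv1 : v1 ∈ openNbhd G T)
    (hdeg2 : ∀ z ∈ VP, z ≠ vl → degOf G z = 2)
    (hvl : vl ∈ openNbhd G T ∨ 2 < degOf G vl)
    (H : Set V) (hH : H ∈ maxset w (secl G k F)) :
    (vl ∈ openNbhd G H ∧
        ¬((openNbhd G H ∩ (VP \ (F ∪ {vl}))).ncard = 1 ∧ vl ∈ H) ∧ ¬(VP ⊆ H)) ∨
      (vl ∉ openNbhd G H ∧
        ((openNbhd G H ∩ (VP \ (F ∪ {vl}))).ncard = 1 ∧ vl ∈ H) ∧ ¬(VP ⊆ H)) ∨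
      (vl ∉ openNbhd G H ∧
        ¬((openNbhd G H ∩ (VP \ (F ∪ {vl}))).ncard = 1 ∧ vl ∈ H) ∧ VP ⊆ H) :=
  three_way_branching_general G w hw k T F hTF v1 vl P hP VP hVP hPT hv1 hdeg2 H hH

end Secluded
end

section
/- Let G be a finite simple graph, let T ⊆ V(G) with G[T] connected, and let H be an induced subgraph of G that is a tree (connected and acyclic) with T ⊆ V(H). If a vertex v ∈ N_G(T) has at least two neighbors in T, then v ∈ N_G(H). -/
namespace Secluded

open SimpleGraph

variable {V : Type*}

theorem _root_.SimpleGraph.IsAcyclic.mem_support_of_adj_of_adj {G : SimpleGraph V}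
    (hG : G.IsAcyclic) {v u₁ u₂ : V} (h₁ : G.Adj v u₁) (h₂ : G.Adj v u₂) (hne : u₁ ≠ u₂)
    (p : G.Walk u₁ u₂) : v ∈ p.support := by
  by_contra hv
  -- the edge `vu₁` is a bridge, yet `v → u₂ ⇝ u₁` avoids it
  have hbridge : s(v, u₁) ∈ (Walk.cons h₂ p.reverse).edges :=
    isBridge_iff_forall_walk_mem_edges.mp (isAcyclic_iff_forall_isBridge.mp hG h₁) _
  rw [Walk.edges_cons, List.mem_cons] at hbridge
  rcases hbridge with heq | hmem
  · exact hne (Sym2.congr_right.mp heq)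
  · exact hv (by simpa using p.reverse.fst_mem_support_of_mem_edges hmem)

theorem two_neighbors_forced_general (G : SimpleGraph V)
    (T : Set V) (hTconn : (G.induce T).Connected)
    (H : Set V) (hH : IsInducedTree G H) (hTH : T ⊆ H)
    (v : V) (hv : v ∈ openNbhd G T)
    (h2 : 2 ≤ (G.neighborSet v ∩ T).ncard) :
    v ∈ openNbhd G H := by
  obtain ⟨hvT, -⟩ := hv
  obtain ⟨u₁, ⟨hvu₁, hu₁⟩, u₂, ⟨hvu₂, hu₂⟩, hne⟩ :=
    (Set.one_lt_ncard_iff_nontrivial_and_finite.mp h2).1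
  refine ⟨fun hvH => hvT ?_, u₁, hTH hu₁, hvu₁⟩
  obtain ⟨p⟩ := hTconn.preconnected ⟨u₁, hu₁⟩ ⟨u₂, hu₂⟩
  have hv_supp : (⟨v, hvH⟩ : H) ∈ (p.map (induceHomOfLE G hTH).toHom).support :=
    hH.isAcyclic.mem_support_of_adj_of_adj (u₁ := ⟨u₁, hTH hu₁⟩) (u₂ := ⟨u₂, hTH hu₂⟩)
      (by simpa using hvu₁) (by simpa using hvu₂) (by simpa using hne) _
  obtain ⟨x, -, hx⟩ := List.mem_map.mp (Walk.support_map _ p ▸ hv_supp)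
  have hxv : x.1 = v := congrArg Subtype.val hx
  exact hxv ▸ x.2

/-- if an induced tree `H` of `G` contains the connected set `T` and a
vertex `v ∈ N_G(T)` has at least two neighbors in `T`, then `v ∈ N_G(H)`. -/
theorem two_neighbors_forced [Fintype V] (G : SimpleGraph V)
    (T : Set V) (hTconn : (G.induce T).Connected)
    (H : Set V) (hH : IsInducedTree G H) (hTH : T ⊆ H)
    (v : V) (hv : v ∈ openNbhd G T)
    (h2 : 2 ≤ (G.neighborSet v ∩ T).ncard) :
    v ∈ openNbhd G H :=
  two_neighbors_forced_general G T hTconn H hH hTH v hv h2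

end Secluded
end

section
/- Let G be a finite simple graph and let T ⊆ V(G) with G[T] connected. Let v ∈ T be a degree-1 vertex of G with unique neighbor u, and suppose deg_G(u) ≥ 2. Let T* = (T \ {v}) ∪ {u}. Then |N_{G−v}(T*)| ≥ |N_G(T)|. -/
/-!
If `u ∈ T`, deleting the leaf `v` loses no neighbor of `T`: a vertex outside `T` adjacent to `T`
is not adjacent to `v` (whose only neighbor lies in `T`), so `N_G(T) ⊆ N_{G-v}(T \ {v})`.
If `u ∉ T`, then `v` has no neighbor in `T`, so connectivity of `G[T]` forces `T = {v}`; then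
`N_G(T) = {u}`, while `N_{G-v}({u})` contains the neighbors of `u` other than `v`, of which there
is at least one since `deg u ≥ 2`.
-/

namespace Secluded

open SimpleGraph

variable {V : Type*}

section

variable {G : SimpleGraph V} {T : Set V} {u v : V}

lemma openNbhd_singleton : openNbhd G {v} = G.neighborSet v := by
  ext x
  simp only [openNbhd, Set.mem_singleton_iff, exists_eq_left, Set.mem_ofPred_eq, mem_neighborSet]
  exact ⟨fun h => h.2.symm, fun h => ⟨h.ne', h.symm⟩⟩

lemma neighborSet_gdelete_singleton (huv : u ≠ v) :
    (gdelete G {v}).neighborSet u = G.neighborSet u \ {v} := by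
  ext x
  simp [gdelete, huv]

lemma eq_singleton_of_induce_preconnected (hT : (G.induce T).Preconnected) (hvT : v ∈ T)
    (hdisj : Disjoint (G.neighborSet v) T) : T = {v} := by
  refine Set.eq_singleton_iff_unique_mem.2 ⟨hvT, fun t htT => ?_⟩
  obtain ⟨p⟩ := hT ⟨v, hvT⟩ ⟨t, htT⟩
  cases p with
  | nil => rfl
  | @cons _ w _ hvw _ => exact absurd w.2 (Set.disjoint_left.1 hdisj hvw)

lemma openNbhd_subset_openNbhd_gdelete_sdiff (hvT : v ∈ T) (hNv : G.neighborSet v ⊆ T) :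
    openNbhd G T ⊆ openNbhd (gdelete G {v}) (T \ {v}) := by
  rintro x ⟨hxT, t, htT, hxt⟩
  have htv : t ≠ v := by
    rintro rfl
    exact hxT (hNv hxt.symm)
  have hxv : x ≠ v := by
    rintro rfl
    exact hxT hvT
  exact ⟨fun hx => hxT hx.1, t, ⟨htT, htv⟩, hxt, hxv, htv⟩

end

/-- contracting a degree-1 vertex `v ∈ T` into its unique neighbor `u`
(of degree at least 2) does not decrease the size of the open neighborhood of `T`. -/
theorem contract_leaf_neighborhood [Fintype V] (G : SimpleGraph V)
    (T : Set V) (hTconn : (G.induce T).Connected)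
    (v : V) (hvT : v ∈ T) (u : V) (hvu : G.neighborSet v = {u})
    (hu : 2 ≤ degOf G u) :
    (openNbhd G T).ncard ≤ (openNbhd (gdelete G {v}) ((T \ {v}) ∪ {u})).ncard := by
  have hadj : G.Adj v u := hvu.ge rfl
  by_cases huT : u ∈ T
  · have huT' : u ∈ T \ {v} := ⟨huT, hadj.ne'⟩
    rw [Set.union_eq_left.2 (Set.singleton_subset_iff.2 huT')]
    refine Set.ncard_le_ncard (openNbhd_subset_openNbhd_gdelete_sdiff hvT ?_) (Set.toFinite _)
    rwa [hvu, Set.singleton_subset_iff]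
  · obtain rfl : T = {v} :=
      eq_singleton_of_induce_preconnected hTconn.preconnected hvT
        (by rwa [hvu, Set.disjoint_singleton_left])
    rw [Set.sdiff_self, Set.empty_union, openNbhd_singleton, openNbhd_singleton, hvu,
      neighborSet_gdelete_singleton hadj.ne', Set.ncard_singleton]
    have := Set.pred_ncard_le_ncard_sdiff_singleton (G.neighborSet u) v
    unfold degOf at hu
    omega

end Secluded
end
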